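/- arXiv:2204.06632 — 2 statements merged into one kernel-verified Lean document; each statement's English description precedes it below -/
import Mathlib

section
/- Let p be a positive natural number, let S be a finite index set partitioned into two disjoint subsets T and D (with S = T ∪ D), let W : S → ℝ^p be a covariate map, let π : S → ℝ satisfy π(t) > 0 for all t ∈ S, and let θ ∈ ℝ^p. Define the log-linear hazard h(t) = exp(⟨W(t), θ⟩). Then the approximate score vector satisfies the identity ∑_{t ∈ T} (π(t)/(π(t) + h(t))) • W(t) − ∑_{t ∈ D} (h(t)/(π(t) + h(t))) • W(t) = ∑_{t ∈ S} ( 1[t ∈ D] − 1/(1 + exp(−(⟨−W(t), θ⟩ + log π(t)))) ) • (−W(t)); i.e., the approximate score function equals the score function of a logistic regression with binary response 1[t ∈ D], covariates −W(t), and offset log π(t). -/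
open Finset

/- The logistic regression has linear predictor `⟨-W t, θ⟩ + log π t`, so its fitted probability
`sigmoid (-⟨W t, θ⟩ + log π t)` is exactly the weight `w(t; θ) = π / (π + h)`, and one minus it is
`h / (π + h)`. The residual `1[t ∈ D] - w` is therefore `-w` on `T` and `h / (π + h)` on `D`;
multiplied by the covariate `-W t` this gives the two sums of the approximate score. -/

namespace Real

lemma sigmoid_neg_add_log (a : ℝ) {c : ℝ} (hc : 0 < c) :
    sigmoid (-a + log c) = c / (c + exp a) := by
  rw [sigmoid_def, neg_add, neg_neg, exp_add, exp_neg, exp_log hc]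
  field_simp

lemma one_sub_sigmoid_neg_add_log (a : ℝ) {c : ℝ} (hc : 0 < c) :
    1 - sigmoid (-a + log c) = exp a / (c + exp a) := by
  rw [sigmoid_neg_add_log a hc, one_sub_div (by positivity), add_sub_cancel_left]

end Real

theorem approx_score_eq_logistic_score_general
    {p : ℕ} {ι : Type*} [DecidableEq ι]
    (S T D : Finset ι) (hTD : Disjoint T D) (hS : S = T ∪ D)
    (W : ι → EuclideanSpace ℝ (Fin p)) (π : ι → ℝ)
    (hπ : ∀ t ∈ S, 0 < π t) (θ : EuclideanSpace ℝ (Fin p)) :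
    (∑ t ∈ T, (π t / (π t + Real.exp (inner ℝ (W t) θ : ℝ))) • W t)
      - (∑ t ∈ D, (Real.exp (inner ℝ (W t) θ : ℝ) /
            (π t + Real.exp (inner ℝ (W t) θ : ℝ))) • W t)
    = ∑ t ∈ S,
        (((if t ∈ D then (1 : ℝ) else 0)
            - 1 / (1 + Real.exp (-((inner ℝ (-W t) θ : ℝ) + Real.log (π t)))))
          • (-W t)) := by
  subst hS
  simp only [one_div, ← Real.sigmoid_def, inner_neg_left]
  rw [sum_union hTD, sub_eq_add_neg, ← sum_neg_distrib]
  congr 1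
  · refine sum_congr rfl fun t ht => ?_
    rw [if_neg (disjoint_left.mp hTD ht),
      Real.sigmoid_neg_add_log _ (hπ t (mem_union_left D ht)), zero_sub, neg_smul_neg]
  · refine sum_congr rfl fun t ht => ?_
    rw [if_pos ht, Real.one_sub_sigmoid_neg_add_log _ (hπ t (mem_union_right T ht)), smul_neg]

/-- The approximate subsampling score function under a log-linear hazard
equals the score function of a logistic regression with binary response
`1[t ∈ D]`, covariates `−W(t)`, and offset `log π(t)`. -/
theorem approx_score_eq_logistic_score
    {p : ℕ} (hp : 0 < p) {ι : Type*} [DecidableEq ι]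
    (S T D : Finset ι) (hTD : Disjoint T D) (hS : S = T ∪ D)
    (W : ι → EuclideanSpace ℝ (Fin p)) (π : ι → ℝ)
    (hπ : ∀ t ∈ S, 0 < π t) (θ : EuclideanSpace ℝ (Fin p)) :
    (∑ t ∈ T, (π t / (π t + Real.exp (inner ℝ (W t) θ : ℝ))) • W t)
      - (∑ t ∈ D, (Real.exp (inner ℝ (W t) θ : ℝ) /
            (π t + Real.exp (inner ℝ (W t) θ : ℝ))) • W t)
    = ∑ t ∈ S,
        (((if t ∈ D then (1 : ℝ) else 0)
            - 1 / (1 + Real.exp (-((inner ℝ (-W t) θ : ℝ) + Real.log (π t)))))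
          • (-W t)) :=
  approx_score_eq_logistic_score_general S T D hTD hS W π hπ θ
end

section
/- Let p be a positive natural number, let S be a finite index set partitioned into disjoint subsets T (event times) and D (subsampled times), let W : S → ℝ^p, let π : S → ℝ with π(t) > 0, and let θ ∈ ℝ^p. Define h(t) = exp(⟨W(t), θ⟩), the weight w(t) = π(t)/(π(t) + h(t)), the logistic covariates W̃(t) = −W(t), and the logistic probability μ(t) = 1/(1 + exp(−(⟨W̃(t), θ⟩ + log π(t)))). Then for every t ∈ S, w(t)·(1 − w(t))·(W(t)·W(t)ᵀ) = μ(t)·(1 − μ(t))·(W̃(t)·W̃(t)ᵀ), and consequently ∑_{t ∈ S} w(t)(1 − w(t))·W(t)W(t)ᵀ = ∑_{t ∈ S} μ(t)(1 − μ(t))·W̃(t)W̃(t)ᵀ; i.e., the sampling-unbiased estimator of the information matrix Ξ(θ) equals the Fisher information of the logistic regression with response 1[t ∈ D], covariates W̃(t), and offset log π(t). -/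
open Finset Matrix

theorem Matrix.vecMulVec_neg_neg {m n α : Type*} [Mul α] [HasDistribNeg α]
    (w : m → α) (v : n → α) : vecMulVec (-w) (-v) = vecMulVec w v := by
  rw [neg_vecMulVec, vecMulVec_neg, neg_neg]

theorem one_div_one_add_exp_neg_add_log {x : ℝ} (hx : 0 < x) (z : ℝ) :
    1 / (1 + Real.exp (-(-z + Real.log x))) = x / (x + Real.exp z) := by
  rw [neg_add, neg_neg, Real.exp_add, Real.exp_neg, Real.exp_log hx]
  field_simp

theorem info_estimator_eq_logistic_fisher_general
    {p : ℕ} {ι : Type*} (S : Finset ι)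
    (W : ι → EuclideanSpace ℝ (Fin p)) (π : ι → ℝ)
    (hπ : ∀ t ∈ S, 0 < π t) (θ : EuclideanSpace ℝ (Fin p)) :
    (∀ t ∈ S,
      ((π t / (π t + Real.exp (inner ℝ (W t) θ : ℝ)))
          * (1 - π t / (π t + Real.exp (inner ℝ (W t) θ : ℝ))))
          • Matrix.vecMulVec (W t) (W t)
        = ((1 / (1 + Real.exp (-((inner ℝ (-W t) θ : ℝ) + Real.log (π t)))))
            * (1 - 1 / (1 + Real.exp (-((inner ℝ (-W t) θ : ℝ) + Real.log (π t))))))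
          • Matrix.vecMulVec (-W t) (-W t)) ∧
    (∑ t ∈ S,
        ((π t / (π t + Real.exp (inner ℝ (W t) θ : ℝ)))
          * (1 - π t / (π t + Real.exp (inner ℝ (W t) θ : ℝ))))
          • Matrix.vecMulVec (W t) (W t)
      = ∑ t ∈ S,
        ((1 / (1 + Real.exp (-((inner ℝ (-W t) θ : ℝ) + Real.log (π t)))))
          * (1 - 1 / (1 + Real.exp (-((inner ℝ (-W t) θ : ℝ) + Real.log (π t))))))
          • Matrix.vecMulVec (-W t) (-W t)) := by
  refine ⟨fun t ht => ?_, sum_congr rfl fun t ht => ?_⟩ <;>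
    rw [inner_neg_left, one_div_one_add_exp_neg_add_log (hπ t ht), WithLp.ofLp_neg,
      vecMulVec_neg_neg]

/-- The sampling-unbiased estimator of the information matrix equals the
Fisher information of the logistic regression with response `1[t ∈ D]`,
covariates `W̃(t) = −W(t)`, and offset `log π(t)`. -/
theorem info_estimator_eq_logistic_fisher
    {p : ℕ} (hp : 0 < p) {ι : Type*} [DecidableEq ι]
    (S T D : Finset ι) (hTD : Disjoint T D) (hS : S = T ∪ D)
    (W : ι → EuclideanSpace ℝ (Fin p)) (π : ι → ℝ)
    (hπ : ∀ t ∈ S, 0 < π t) (θ : EuclideanSpace ℝ (Fin p)) :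
    (∀ t ∈ S,
      ((π t / (π t + Real.exp (inner ℝ (W t) θ : ℝ)))
          * (1 - π t / (π t + Real.exp (inner ℝ (W t) θ : ℝ))))
          • Matrix.vecMulVec (W t) (W t)
        = ((1 / (1 + Real.exp (-((inner ℝ (-W t) θ : ℝ) + Real.log (π t)))))
            * (1 - 1 / (1 + Real.exp (-((inner ℝ (-W t) θ : ℝ) + Real.log (π t))))))
          • Matrix.vecMulVec (-W t) (-W t)) ∧
    (∑ t ∈ S,
        ((π t / (π t + Real.exp (inner ℝ (W t) θ : ℝ)))
          * (1 - π t / (π t + Real.exp (inner ℝ (W t) θ : ℝ))))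
          • Matrix.vecMulVec (W t) (W t)
      = ∑ t ∈ S,
        ((1 / (1 + Real.exp (-((inner ℝ (-W t) θ : ℝ) + Real.log (π t)))))
          * (1 - 1 / (1 + Real.exp (-((inner ℝ (-W t) θ : ℝ) + Real.log (π t))))))
          • Matrix.vecMulVec (-W t) (-W t)) :=
  info_estimator_eq_logistic_fisher_general S W π hπ θ
end
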